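/- (L¹ uncertainty, infinite measure.) Let (Ω,d,μ) be a metric measure space with μ(Ω) = ∞ whose isoperimetric profile I is concave, continuous, increasing, I(0) = 0, and strictly positive on (0,∞). Let w : Ω → (0,∞) be an isoperimetric weight with constant C(w) = sup_{r>0} μ{w ≤ r}/(r·I(μ{w ≤ r})) < ∞, and let α > 0. Let f : Ω → ℝ be Lipschitz with compact support, with |∇f| and w^α f integrable, and assume the co-area inequality ∫_0^{∞} I(μ{|f| > s}) ds ≤ ∫_Ω |∇f| dμ. Then for every r > 0, ∫_Ω |f| dμ ≤ 2 C(w) r ∫_Ω |∇f| dμ + 2 r^{−α} ∫_Ω w^α |f| dμ. -/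

import Mathlib

open MeasureTheory Filter Set Topology
open scoped ENNReal NNReal

/-- The modulus of the gradient of `f` at `x`:
`|∇f|(x) = limsup_{y→x} |f(x) - f(y)| / d(x,y)`. -/
noncomputable def gradMod {Ω : Type*} [MetricSpace Ω] (f : Ω → ℝ) (x : Ω) : ℝ :=
  Filter.limsup (fun y => |f x - f y| / dist x y) (𝓝[≠] x)

/-- The Minkowski content (perimeter) of a set `A`:
`μ⁺(A) = liminf_{h→0⁺} (μ(A_h) - μ(A))/h`, where `A_h` is the open `h`-thickening of `A`. -/
noncomputable def minkContent {Ω : Type*} [MetricSpace Ω] [MeasurableSpace Ω]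
    (μ : Measure Ω) (A : Set Ω) : ℝ≥0∞ :=
  Filter.liminf (fun h : ℝ => (μ (Metric.thickening h A) - μ A) / ENNReal.ofReal h)
    (𝓝[>] (0 : ℝ))

/-- The isoperimetric profile of `(Ω,d,μ)`:
`I(t) = inf {μ⁺(A) : A Borel, μ(A) = t}`. -/
noncomputable def isoProfile {Ω : Type*} [MetricSpace Ω] [MeasurableSpace Ω]
    (μ : Measure Ω) (t : ℝ≥0∞) : ℝ≥0∞ :=
  ⨅ (A : Set Ω) (_ : MeasurableSet A) (_ : μ A = t), minkContent μ A

/-- `m` is a median of `f` with respect to `μ`. -/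
def IsMedian {Ω : Type*} [MeasurableSpace Ω] (μ : Measure Ω) (f : Ω → ℝ) (m : ℝ) : Prop :=
  μ Set.univ / 2 ≤ μ {x | m ≤ f x} ∧ μ Set.univ / 2 ≤ μ {x | f x ≤ m}


/-!
By the layer-cake formula, `∫|f| = ∫₀^∞ μ{|f| > s} ds`; split each level set along
`B = {w ≤ r}`. Concavity of `I` with `I(0) = 0` makes `I(t)/t` nonincreasing, so the weight
inequality `μ(B) ≤ C r I(μ B)` descends to every `t ≤ μ(B)`: `t ≤ C r I(t)`. Since `I` is
increasing, `μ({|f| > s} ∩ B) ≤ C r I(μ{|f| > s})`, and the co-area inequality turns the integral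
of these bounds into `C r ∫|∇f|`. On `{w > r}` we have `1 ≤ r^{-α} w^α`, which gives the second
term. (`C ≥ 0` because `μ ≠ 0`.)
-/

theorem gradMod_nonneg {Ω : Type*} [MetricSpace Ω] {K : ℝ≥0} {f : Ω → ℝ}
    (hf : LipschitzWith K f) (x : Ω) : 0 ≤ gradMod f x := by
  rcases eq_or_neBot (𝓝[≠] x) with hbot | hne
  · -- at an isolated point the `limsup` is the junk value `sInf univ = 0`
    simp [gradMod, hbot, limsup_eq]
  · refine le_limsup_of_frequently_le (.of_forall fun y => by positivity) ⟨K, eventually_map.2 ?_⟩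
    filter_upwards [self_mem_nhdsWithin] with y hy
    rw [div_le_iff₀ (dist_pos.2 (Ne.symm hy)), ← Real.dist_eq]
    exact hf.dist_le_mul x y

theorem MonotoneOn.nonneg_of_map_zero {I : ℝ → ℝ} (hI : MonotoneOn I (Ici 0)) (hI0 : I 0 = 0)
    {t : ℝ} (ht : 0 ≤ t) : 0 ≤ I t :=
  hI0 ▸ hI self_mem_Ici ht ht

/-- `I t / t` is antitone on `(0, ∞)`, with the denominators cleared. -/
theorem ConcaveOn.mul_le_mul_of_map_zero {I : ℝ → ℝ} (hI : ConcaveOn ℝ (Ici 0) I)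
    (hI0 : I 0 = 0) {t m : ℝ} (ht : 0 ≤ t) (htm : t ≤ m) : t * I m ≤ m * I t := by
  rcases ht.eq_or_lt with rfl | ht
  · simp [hI0]
  rcases htm.eq_or_lt with rfl | htm
  · exact le_rfl
  have := hI.neg.secant_mono_aux1 self_mem_Ici (mem_Ici.2 (ht.trans htm).le) ht htm
  simp only [Pi.neg_apply, hI0] at this
  linarith

theorem ConcaveOn.le_mul_apply_of_le {I : ℝ → ℝ} (hI : ConcaveOn ℝ (Ici 0) I) (hI0 : I 0 = 0)
    (hImono : MonotoneOn I (Ici 0)) {c m t : ℝ} (hm : m ≤ c * I m)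
    (ht : 0 ≤ t) (htm : t ≤ m) : t ≤ c * I t := by
  have hIt : 0 ≤ I t := hImono.nonneg_of_map_zero hI0 ht
  have hIm : 0 ≤ I m := hImono.nonneg_of_map_zero hI0 (ht.trans htm)
  rcases hIm.eq_or_lt with hIm | hIm
  · have ht0 : t = 0 := by
      rw [← hIm, mul_zero] at hm
      linarith
    simp [ht0, hI0]
  · refine le_of_mul_le_mul_right ?_ hIm
    calc t * I m ≤ m * I t := hI.mul_le_mul_of_map_zero hI0 ht htm
      _ ≤ c * I m * I t := mul_le_mul_of_nonneg_right hm hIt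
      _ = c * I t * I m := by ring

theorem HasCompactSupport.measure_lt_abs_ne_top {Ω : Type*} [TopologicalSpace Ω]
    [MeasurableSpace Ω] {μ : Measure Ω} [IsFiniteMeasureOnCompacts μ] {f : Ω → ℝ}
    (hf : HasCompactSupport f) {s : ℝ} (hs : 0 ≤ s) : μ {x | s < |f x|} ≠ ⊤ := by
  refine ((measure_mono fun x hx => subset_tsupport f ?_).trans_lt hf.measure_lt_top).ne
  intro hfx
  have : s < |f x| := hx
  rw [hfx, abs_zero] at this
  linarith

section IsoperimetricWeight

variable {Ω : Type*} [MeasurableSpace Ω] (μ : Measure Ω)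

def IsIsoperimetricWeight (I : ℝ → ℝ) (w : Ω → ℝ) (C : ℝ) : Prop :=
  ∀ r : ℝ, 0 < r → μ {x | w x ≤ r} ≤ ENNReal.ofReal (C * r * I ((μ {x | w x ≤ r}).toReal))

variable {μ}

theorem IsIsoperimetricWeight.nonneg {I : ℝ → ℝ} {w : Ω → ℝ} {C : ℝ}
    (hw : IsIsoperimetricWeight μ I w C) (hμ : μ ≠ 0) (hI : ∀ t, 0 ≤ t → 0 ≤ I t) : 0 ≤ C := by
  by_contra! hC
  have hnull : ∀ n : ℕ, μ {x | w x ≤ n + 1} = 0 := fun n =>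
    nonpos_iff_eq_zero.1 <| (hw _ n.cast_add_one_pos).trans_eq <| ENNReal.ofReal_eq_zero.2 <|
      mul_nonpos_of_nonpos_of_nonneg (mul_nonpos_of_nonpos_of_nonneg hC.le n.cast_add_one_pos.le)
        (hI _ ENNReal.toReal_nonneg)
  have hcover : (univ : Set Ω) = ⋃ n : ℕ, {x | w x ≤ n + 1} :=
    (eq_univ_of_forall fun x => mem_iUnion.2 ⟨⌈w x⌉₊, (Nat.le_ceil (w x)).trans (by linarith)⟩).symm
  exact hμ (Measure.measure_univ_eq_zero.1 (hcover ▸ measure_iUnion_null hnull))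

variable {I : ℝ → ℝ} {c : ℝ}

theorem measure_inter_le_of_le_profile (hI : ConcaveOn ℝ (Ici 0) I) (hI0 : I 0 = 0)
    (hImono : MonotoneOn I (Ici 0)) (hc : 0 ≤ c) {A B : Set Ω}
    (hB : μ B ≤ ENNReal.ofReal (c * I (μ B).toReal)) (hA : μ A ≠ ⊤) :
    μ (A ∩ B) ≤ ENNReal.ofReal (c * I (μ A).toReal) := by
  have hBtop : μ B ≠ ⊤ := ne_top_of_le_ne_top ENNReal.ofReal_ne_top hB
  have hAB : (μ (A ∩ B)).toReal ≤ c * I (μ (A ∩ B)).toReal :=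
    hI.le_mul_apply_of_le hI0 hImono (ENNReal.toReal_le_of_le_ofReal
      (mul_nonneg hc (hImono.nonneg_of_map_zero hI0 ENNReal.toReal_nonneg)) hB)
      ENNReal.toReal_nonneg (ENNReal.toReal_mono hBtop (measure_mono inter_subset_right))
  have hmono : I (μ (A ∩ B)).toReal ≤ I (μ A).toReal :=
    hImono (mem_Ici.2 ENNReal.toReal_nonneg) (mem_Ici.2 ENNReal.toReal_nonneg)
      (ENNReal.toReal_mono hA (measure_mono inter_subset_left))
  rw [← ENNReal.ofReal_toReal (measure_ne_top_of_subset inter_subset_right hBtop)]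
  exact ENNReal.ofReal_le_ofReal (hAB.trans (mul_le_mul_of_nonneg_left hmono hc))

theorem lintegral_abs_le_of_le_profile (hI : ConcaveOn ℝ (Ici 0) I) (hI0 : I 0 = 0)
    (hImono : MonotoneOn I (Ici 0)) (hc : 0 ≤ c) {B : Set Ω} (hBmeas : MeasurableSet B)
    (hB : μ B ≤ ENNReal.ofReal (c * I (μ B).toReal)) {f : Ω → ℝ} (hf : AEMeasurable f μ)
    (hlevel : ∀ s : ℝ, 0 < s → μ {x | s < |f x|} ≠ ⊤) :
    ∫⁻ x, ENNReal.ofReal |f x| ∂μ ≤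
      ENNReal.ofReal c * (∫⁻ s in Ioi 0, ENNReal.ofReal (I (μ {x | s < |f x|}).toReal)) +
        ∫⁻ x in Bᶜ, ENNReal.ofReal |f x| ∂μ := by
  have habs : ∀ ν : Measure Ω, 0 ≤ᵐ[ν] fun x => |f x| := fun ν => ae_of_all _ fun x => abs_nonneg _
  have hanti : Antitone fun s : ℝ => μ.restrict Bᶜ {x | s < |f x|} := fun s s' hss' =>
    measure_mono fun x hx => hss'.trans_lt hx
  calc ∫⁻ x, ENNReal.ofReal |f x| ∂μ = ∫⁻ s in Ioi 0, μ {x | s < |f x|} :=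
        lintegral_eq_lintegral_meas_lt μ (habs μ) hf.abs
    _ ≤ ∫⁻ s in Ioi 0, (ENNReal.ofReal c * ENNReal.ofReal (I (μ {x | s < |f x|}).toReal) +
          μ.restrict Bᶜ {x | s < |f x|}) := by
        refine setLIntegral_mono' measurableSet_Ioi fun s hs => ?_
        rw [← ENNReal.ofReal_mul hc, Measure.restrict_apply' hBmeas.compl]
        exact (measure_le_inter_add_sdiff μ _ B).trans
          (add_le_add (measure_inter_le_of_le_profile hI hI0 hImono hc hB (hlevel s hs)) le_rfl)
    _ = ENNReal.ofReal c * (∫⁻ s in Ioi 0, ENNReal.ofReal (I (μ {x | s < |f x|}).toReal)) +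
          ∫⁻ x in Bᶜ, ENNReal.ofReal |f x| ∂μ := by
        rw [lintegral_add_right _ hanti.measurable, lintegral_const_mul' _ _ ENNReal.ofReal_ne_top,
          lintegral_eq_lintegral_meas_lt _ (habs _) hf.abs.restrict]

theorem setLIntegral_abs_le_rpow_mul {w : Ω → ℝ} (hw : Measurable w) (f : Ω → ℝ) {r α : ℝ}
    (hr : 0 < r) (hα : 0 ≤ α) :
    ∫⁻ x in {x | r < w x}, ENNReal.ofReal |f x| ∂μ ≤
      ENNReal.ofReal (r ^ (-α)) * ∫⁻ x, ENNReal.ofReal (w x ^ α * |f x|) ∂μ := by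
  calc ∫⁻ x in {x | r < w x}, ENNReal.ofReal |f x| ∂μ
      ≤ ∫⁻ x in {x | r < w x},
          ENNReal.ofReal (r ^ (-α)) * ENNReal.ofReal (w x ^ α * |f x|) ∂μ := by
        refine setLIntegral_mono' (measurableSet_lt measurable_const hw) fun x hx => ?_
        rw [← ENNReal.ofReal_mul (by positivity), ← mul_assoc]
        have hwr : 1 ≤ r ^ (-α) * w x ^ α := by
          rw [Real.rpow_neg hr.le, inv_mul_eq_div, one_le_div (by positivity)]
          exact Real.rpow_le_rpow hr.le (le_of_lt hx) hα
        exact ENNReal.ofReal_le_ofReal (le_mul_of_one_le_left (abs_nonneg _) hwr)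
    _ ≤ ENNReal.ofReal (r ^ (-α)) * ∫⁻ x, ENNReal.ofReal (w x ^ α * |f x|) ∂μ := by
        rw [lintegral_const_mul' _ _ ENNReal.ofReal_ne_top]
        exact mul_le_mul_right (setLIntegral_le_lintegral _ _) _

end IsoperimetricWeight

theorem l1_uncertainty_infinite_general {Ω : Type*} [MetricSpace Ω] [MeasurableSpace Ω]
    [BorelSpace Ω] (μ : Measure Ω) [IsFiniteMeasureOnCompacts μ]
    (hμ : μ Set.univ = ⊤)
    (I : ℝ → ℝ)
    (hIconc : ConcaveOn ℝ (Set.Ici 0) I)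
    (hImono : MonotoneOn I (Set.Ici 0))
    (hI0 : I 0 = 0)
    (w : Ω → ℝ) (hw_meas : Measurable w) (hw_pos : ∀ x, 0 < w x)
    (C : ℝ)
    (hC : ∀ r : ℝ, 0 < r →
      μ {x | w x ≤ r} ≤ ENNReal.ofReal (C * r * I ((μ {x | w x ≤ r}).toReal)))
    (α : ℝ) (hα : 0 < α)
    (K : ℝ≥0) (f : Ω → ℝ) (hlip : LipschitzWith K f) (hsupp : HasCompactSupport f)
    (hwfint : Integrable (fun x => w x ^ α * f x) μ)
    (hcoarea : ∫⁻ s in Set.Ioi (0:ℝ), ENNReal.ofReal (I ((μ {x | s < |f x|}).toReal)) ≤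
      ENNReal.ofReal (∫ x, gradMod f x ∂μ)) :
    ∀ r : ℝ, 0 < r →
      ∫ x, |f x| ∂μ ≤
        2 * C * r * ∫ x, gradMod f x ∂μ + 2 * r ^ (-α) * ∫ x, w x ^ α * |f x| ∂μ := by
  intro r hr
  have hC0 : 0 ≤ C := IsIsoperimetricWeight.nonneg hC (fun h => by simp [h] at hμ)
    fun t => hImono.nonneg_of_map_zero hI0
  have hCr : 0 ≤ C * r := by positivity
  have hrα : 0 ≤ r ^ (-α) := by positivity
  have hwα : ∀ x, 0 ≤ w x ^ α := fun x => Real.rpow_nonneg (hw_pos x).le α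
  have hG : 0 ≤ ∫ x, gradMod f x ∂μ := integral_nonneg (gradMod_nonneg hlip)
  have hW : 0 ≤ ∫ x, w x ^ α * |f x| ∂μ :=
    integral_nonneg fun x => mul_nonneg (hwα x) (abs_nonneg _)
  have hwf : Integrable (fun x => w x ^ α * |f x|) μ :=
    hwfint.abs.congr (ae_of_all _ fun x => by simp only [abs_mul, abs_of_nonneg (hwα x)])
  have hlintegral : ∫⁻ x, ENNReal.ofReal |f x| ∂μ ≤
      ENNReal.ofReal (C * r) * ENNReal.ofReal (∫ x, gradMod f x ∂μ) +
        ENNReal.ofReal (r ^ (-α)) * ∫⁻ x, ENNReal.ofReal (w x ^ α * |f x|) ∂μ :=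
    (lintegral_abs_le_of_le_profile hIconc hI0 hImono hCr
      (measurableSet_le hw_meas measurable_const) (hC r hr) hlip.continuous.aemeasurable
      fun s hs => hsupp.measure_lt_abs_ne_top hs.le).trans <|
    add_le_add (mul_le_mul_right hcoarea _)
      (by simpa only [compl_ofPred, not_le] using setLIntegral_abs_le_rpow_mul hw_meas f hr hα.le)
  have hreal : ∫ x, |f x| ∂μ ≤
      C * r * ∫ x, gradMod f x ∂μ + r ^ (-α) * ∫ x, w x ^ α * |f x| ∂μ := by
    rw [← ENNReal.ofReal_le_ofReal_iff (by positivity), ENNReal.ofReal_add (by positivity)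
      (by positivity), ENNReal.ofReal_mul hCr, ENNReal.ofReal_mul hrα,
      ofReal_integral_eq_lintegral_ofReal
        (hlip.continuous.integrable_of_hasCompactSupport hsupp).abs
        (ae_of_all _ fun x => abs_nonneg _),
      ofReal_integral_eq_lintegral_ofReal hwf
        (ae_of_all _ fun x => mul_nonneg (hwα x) (abs_nonneg _))]
    exact hlintegral
  linarith [mul_nonneg hCr hG, mul_nonneg hrα hW]

/-- **L¹ uncertainty, infinite measure.**
On a metric measure space with `μ(Ω) = ∞` whose isoperimetric profile `I` is concave,
continuous, increasing, zero at zero and positive on `(0,∞)`, if `w` is an isoperimetric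
weight with constant `C` (i.e. `μ{w ≤ r} ≤ C r I(μ{w ≤ r})` for all `r > 0`), `α > 0`,
and `f` is Lipschitz with compact support, `|∇f|` and `w^α f` integrable, satisfying the
co-area inequality, then for every `r > 0`,
`∫|f| dμ ≤ 2 C r ∫|∇f| dμ + 2 r^{-α} ∫ w^α |f| dμ`. -/
theorem l1_uncertainty_infinite {Ω : Type*} [MetricSpace Ω] [MeasurableSpace Ω]
    [BorelSpace Ω] (μ : Measure Ω) [IsFiniteMeasureOnCompacts μ]
    (hμ : μ Set.univ = ⊤)
    (I : ℝ → ℝ)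
    (hIprof : ∀ t : ℝ, 0 ≤ t →
      ENNReal.ofReal (I t) = isoProfile μ (ENNReal.ofReal t))
    (hIconc : ConcaveOn ℝ (Set.Ici 0) I)
    (hIcont : ContinuousOn I (Set.Ici 0))
    (hImono : MonotoneOn I (Set.Ici 0))
    (hI0 : I 0 = 0)
    (hIpos : ∀ t : ℝ, 0 < t → 0 < I t)
    (w : Ω → ℝ) (hw_meas : Measurable w) (hw_pos : ∀ x, 0 < w x)
    (C : ℝ)
    (hC : ∀ r : ℝ, 0 < r →
      μ {x | w x ≤ r} ≤ ENNReal.ofReal (C * r * I ((μ {x | w x ≤ r}).toReal)))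
    (α : ℝ) (hα : 0 < α)
    (K : ℝ≥0) (f : Ω → ℝ) (hlip : LipschitzWith K f) (hsupp : HasCompactSupport f)
    (hgint : Integrable (gradMod f) μ)
    (hwfint : Integrable (fun x => w x ^ α * f x) μ)
    (hcoarea : ∫⁻ s in Set.Ioi (0:ℝ), ENNReal.ofReal (I ((μ {x | s < |f x|}).toReal)) ≤
      ENNReal.ofReal (∫ x, gradMod f x ∂μ)) :
    ∀ r : ℝ, 0 < r →
      ∫ x, |f x| ∂μ ≤
        2 * C * r * ∫ x, gradMod f x ∂μ + 2 * r ^ (-α) * ∫ x, w x ^ α * |f x| ∂μ :=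
  l1_uncertainty_infinite_general μ hμ I hIconc hImono hI0 w hw_meas hw_pos C hC α hα K f hlip hsupp
    hwfint hcoarea
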